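/- Let n ≥ 3, k an integer with 1 < k < n/2, and p > nk/(n-2k). Let u be a regular solution of the initial value problem -(1/k)·C(n-1,k-1)·(r^{n-k}|u'|^{k-1}u')' = r^{n-1}u^p, u > 0, u'(0) = 0, u(0) = ρ > 0. Then u'(r) < 0 for all r > 0, u(r) → 0 as r → ∞, and there exist positive constants C₁, C₂ and R such that C₁·r^{-(n-2k)/k} ≤ u(r) ≤ C₂·r^{-2k/(p-k)} for all r ≥ R. -/

import Mathlib

open MeasureTheory Real Set Filter Asymptotics

noncomputable section

namespace KHessianPaper

/-- The binomial coefficient `C(n-1, k-1)` as a real number. -/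
def binomC (n k : ℕ) : ℝ := ((n - 1).choose (k - 1) : ℝ)

/-- The flux `w(r) = r^{n-k} |u'(r)|^{k-1} u'(r)`. -/
def flux (n k : ℕ) (u : ℝ → ℝ) (r : ℝ) : ℝ :=
  r ^ (n - k) * |deriv u r| ^ (k - 1) * deriv u r

/-- `u` is a regular solution of the radial `k`-Hessian initial value problem
`-(1/k) C(n-1,k-1) (r^{n-k} |u'|^{k-1} u')' = r^{n-1} u^p`, `u > 0`, `u'(0) = 0`, `u(0) = ρ`. -/
structure IsRegularSolution (n k : ℕ) (p ρ : ℝ) (u : ℝ → ℝ) : Prop where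
  contDiffOn : ContDiffOn ℝ 1 u (Ici 0)
  deriv_zero : derivWithin u (Ici 0) 0 = 0
  init : u 0 = ρ
  pos : ∀ r : ℝ, 0 ≤ r → 0 < u r
  eqn : ∀ r : ℝ, 0 < r →
    HasDerivAt (flux n k u) (-((k : ℝ) / binomC n k) * r ^ (n - 1) * u r ^ p) r
  radial_smooth : ContDiff ℝ 2 (fun x : EuclideanSpace ℝ (Fin n) => -u ‖x‖)

/-- `φ : [0,∞) → ℝ` is the radial profile of a smooth compactly supported function on `ℝⁿ`. -/
def MemWStar (n : ℕ) (φ : ℝ → ℝ) : Prop :=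
  ∃ Φ : EuclideanSpace ℝ (Fin n) → ℝ,
    ContDiff ℝ (⊤ : ℕ∞) Φ ∧ HasCompactSupport Φ ∧ ∀ x, Φ x = φ ‖x‖

/-- The weak form of the equation tested against `φ`. -/
def WeakEqn (n k : ℕ) (p : ℝ) (u φ : ℝ → ℝ) : Prop :=
  ∫ r in Ioi (0 : ℝ),
      ((1 / (k : ℝ)) * binomC n k * r ^ (n - k) * |deriv u r| ^ (k - 1) * deriv u r
          * deriv φ r
        - r ^ (n - 1) * u r ^ p * φ r) = 0

/-- The second-variation quadratic form `Q_u(φ)`. -/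
def Qform (n k : ℕ) (p : ℝ) (u φ : ℝ → ℝ) : ℝ :=
  binomC n k * ∫ r in Ioi (0 : ℝ), r ^ (n - k) * |deriv u r| ^ (k - 1) * (deriv φ r) ^ 2
    - p * ∫ r in Ioi (0 : ℝ), r ^ (n - 1) * u r ^ (p - 1) * (φ r) ^ 2

/-- `u` is a positive stable solution of the radial `k`-Hessian equation. -/
def IsStableSolution (n k : ℕ) (p : ℝ) (u : ℝ → ℝ) : Prop :=
  (∀ r : ℝ, 0 < r → 0 < u r) ∧ ContDiffOn ℝ 1 u (Ioi 0) ∧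
  (∀ φ, MemWStar n φ → WeakEqn n k p u φ) ∧
  (∀ φ, MemWStar n φ → 0 ≤ Qform n k p u φ)

/-- `u` is a positive stable solution on `(R,∞)` of the radial `k`-Hessian equation. -/
def IsStableSolutionOn (n k : ℕ) (p : ℝ) (R : ℝ) (u : ℝ → ℝ) : Prop :=
  (∀ r : ℝ, 0 < r → 0 < u r) ∧ ContDiffOn ℝ 1 u (Ioi 0) ∧
  (∀ φ, MemWStar n φ → WeakEqn n k p u φ) ∧
  (∀ φ : ℝ → ℝ, ContDiff ℝ (⊤ : ℕ∞) φ → HasCompactSupport φ → tsupport φ ⊆ Ioi R →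
    0 ≤ Qform n k p u φ)

/-- The constant `A` in the singular solution `u_s(r) = A r^{-2k/(p-k)}`. -/
def Aconst (n k : ℕ) (p : ℝ) : ℝ :=
  ((1 / (k : ℝ)) * binomC n k) ^ (1 / (p - k))
    * (2 * (k : ℝ) / (p - (k : ℝ))) ^ ((k : ℝ) / (p - k))
    * ((n : ℝ) - 2 * p * k / (p - k)) ^ (1 / (p - k))

/-- The singular solution `u_s(r) = A r^{-2k/(p-k)}`. -/
def uSing (n k : ℕ) (p : ℝ) (r : ℝ) : ℝ := Aconst n k p * r ^ (-(2 * (k : ℝ) / (p - k)))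

/-- The Joseph–Lundgren exponent (finite form, relevant when `n > 2k+8`). -/
def pJL (n k : ℕ) : ℝ :=
  ((k : ℝ) * ((n : ℝ) ^ 2 - 2 * ((k : ℝ) + 3) * (n : ℝ) + 4 * (k : ℝ))
      + 4 * (k : ℝ) * Real.sqrt (2 * ((k : ℝ) + 1) * (n : ℝ) - 4 * (k : ℝ)))
    / (((n : ℝ) - 2 * (k : ℝ)) * ((n : ℝ) - 2 * (k : ℝ) - 8))

/-- The exponent `p* = k(n+2k)/(n-2k)`. -/
def pStar (n k : ℕ) : ℝ := (k : ℝ) * ((n : ℝ) + 2 * (k : ℝ)) / ((n : ℝ) - 2 * (k : ℝ))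

end KHessianPaper

/-!
The flux `w = r ^ (n-k) |u'| ^ (k-1) u'` tends to `0` at `0` and has `w' < 0`, so `w < 0` and
hence `u' < 0`. As `u` decreases, integrating `w'` over `(0, r)` gives
`w(r) ≤ -(k / (n C(n-1,k-1))) u(r) ^ p r ^ n`, that is `-u' ≥ c u ^ (p/k) r`; integrating this
shows `u ^ (-(p-k)/k) ≳ r ^ 2`, the upper bound, and in particular `u → 0`. Conversely
`w(r) ≤ w(1) < 0` for `r ≥ 1` gives `-u' ≳ r ^ (-(n-k)/k)`, and integrating over `(r, ∞)` with
`u(∞) = 0` gives the lower bound; `2k < n` makes that exponent exceed `1`.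
-/

open Topology

theorem monotoneOn_of_forall_hasDerivAt_nonneg {D : Set ℝ} (hD : Convex ℝ D) {f f' : ℝ → ℝ}
    (hf : ∀ x ∈ D, HasDerivAt f (f' x) x) (hf' : ∀ x ∈ interior D, 0 ≤ f' x) :
    MonotoneOn f D :=
  monotoneOn_of_hasDerivWithinAt_nonneg hD (fun x hx ↦ (hf x hx).continuousAt.continuousWithinAt)
    (fun x hx ↦ (hf x (interior_subset hx)).hasDerivWithinAt) hf'

theorem antitoneOn_of_forall_hasDerivAt_nonpos {D : Set ℝ} (hD : Convex ℝ D) {f f' : ℝ → ℝ}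
    (hf : ∀ x ∈ D, HasDerivAt f (f' x) x) (hf' : ∀ x ∈ interior D, f' x ≤ 0) :
    AntitoneOn f D :=
  antitoneOn_of_hasDerivWithinAt_nonpos hD (fun x hx ↦ (hf x hx).continuousAt.continuousWithinAt)
    (fun x hx ↦ (hf x (interior_subset hx)).hasDerivWithinAt) hf'

theorem AntitoneOn.le_of_tendsto_nhdsGT {g : ℝ → ℝ} {a b L : ℝ} (hab : a < b)
    (hg : AntitoneOn g (Ioc a b)) (hL : Tendsto g (𝓝[>] a) (𝓝 L)) : g b ≤ L :=
  ge_of_tendsto hL <| by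
    filter_upwards [Ioc_mem_nhdsGT hab] with x hx
    exact hg hx (right_mem_Ioc.2 hab) hx.2

theorem exists_le_mul_rpow_of_mul_rpow_le_neg_deriv {f : ℝ → ℝ} {c q : ℝ} (hc : 0 < c)
    (hq : 0 < q) (hpos : ∀ x, 0 < x → 0 < f x) (hf : ∀ x, 0 < x → DifferentiableAt ℝ f x)
    (hf' : ∀ x, 0 < x → c * f x ^ (1 + q) * x ≤ -deriv f x) :
    ∃ C, 0 < C ∧ ∀ r, 2 ≤ r → f r ≤ C * r ^ (-(2 / q)) := by
  have hmono : MonotoneOn (fun x ↦ f x ^ (-q) - q * c / 2 * x ^ 2) (Ioi 0) := by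
    refine monotoneOn_of_forall_hasDerivAt_nonneg (convex_Ioi 0)
      (fun x hx ↦ (((hf x hx).hasDerivAt.rpow_const (Or.inl (hpos x hx).ne')).sub
        ((hasDerivAt_pow 2 x).const_mul _))) fun x hx ↦ ?_
    rw [interior_Ioi] at hx
    have hfx := hpos x hx
    have hcancel : f x ^ (1 + q) * f x ^ (-q - 1) = 1 := by
      rw [← rpow_add hfx, show 1 + q + (-q - 1) = 0 by ring, rpow_zero]
    have h := mul_le_mul_of_nonneg_right (hf' x hx) (rpow_pos_of_pos hfx (-q - 1)).le
    rw [mul_right_comm, mul_assoc c, hcancel] at h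
    have := mul_le_mul_of_nonneg_left h hq.le
    rw [Nat.cast_ofNat, show 2 - 1 = 1 from rfl, pow_one]
    linarith
  refine ⟨(q * c / 4) ^ (-q⁻¹), by positivity, fun r hr ↦ ?_⟩
  have hr0 : 0 < r := by linarith
  have hgrowth : q * c / 4 * r ^ 2 ≤ f r ^ (-q) := by
    have h := hmono (mem_Ioi.2 one_pos) (mem_Ioi.2 hr0) (by linarith)
    have := rpow_pos_of_pos (hpos 1 one_pos) (-q)
    simp only [one_pow] at h
    nlinarith [mul_nonneg (mul_pos hq hc).le (show 0 ≤ r ^ 2 - 4 by nlinarith)]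
  calc f r = (f r ^ (-q)) ^ (-q⁻¹) := by
        rw [← rpow_mul (hpos r hr0).le, neg_mul_neg, mul_inv_cancel₀ hq.ne', rpow_one]
    _ ≤ (q * c / 4 * r ^ 2) ^ (-q⁻¹) :=
        rpow_le_rpow_of_nonpos (by positivity) hgrowth (by simpa using hq.le)
    _ = (q * c / 4) ^ (-q⁻¹) * r ^ (-(2 / q)) := by
        rw [mul_rpow (by positivity) (by positivity), ← rpow_natCast, ← rpow_mul hr0.le]
        congr 2
        push_cast
        ring

theorem div_mul_rpow_neg_le_of_deriv_le {f : ℝ → ℝ} {a m γ : ℝ} (ha : 0 < a) (hγ : 0 < γ)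
    (hf : ∀ x, a ≤ x → DifferentiableAt ℝ f x)
    (hf' : ∀ x, a ≤ x → deriv f x ≤ -(m * x ^ (-(γ + 1))))
    (hlim : Tendsto f atTop (𝓝 0)) : ∀ r, a ≤ r → m / γ * r ^ (-γ) ≤ f r := by
  have hanti : AntitoneOn (fun x ↦ f x - m / γ * x ^ (-γ)) (Ici a) := by
    refine antitoneOn_of_forall_hasDerivAt_nonpos (convex_Ici a)
      (fun x hx ↦ (hf x hx).hasDerivAt.sub
        ((hasDerivAt_rpow_const (Or.inl (ha.trans_le hx).ne')).const_mul _)) fun x hx ↦ ?_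
    rw [interior_Ici] at hx
    have h := hf' x (le_of_lt hx)
    rw [show -γ - 1 = -(γ + 1) by ring]
    field_simp
    linarith
  have hlim' : Tendsto (fun x ↦ f x - m / γ * x ^ (-γ)) atTop (𝓝 0) := by
    simpa using hlim.sub ((tendsto_rpow_neg_atTop hγ).const_mul (m / γ))
  intro r hr
  have : 0 ≤ f r - m / γ * r ^ (-γ) := by
    refine le_of_tendsto hlim' ?_
    filter_upwards [eventually_ge_atTop r] with s hs
    exact hanti hr (hr.trans hs) hs
  linarith

namespace KHessianPaper

section RegularSolution

variable {n k : ℕ} {p ρ : ℝ} {u : ℝ → ℝ} {r : ℝ}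

theorem binomC_pos (h : k ≤ n) : 0 < binomC n k := by
  unfold binomC
  exact_mod_cast Nat.choose_pos (by omega)

theorem flux_eq_of_deriv_nonpos (hk : 0 < k) (hd : deriv u r ≤ 0) :
    flux n k u r = -(r ^ (n - k) * (-deriv u r) ^ k) := by
  obtain ⟨j, rfl⟩ := Nat.exists_eq_add_of_lt hk
  rw [flux, abs_of_nonpos hd, Nat.add_sub_cancel, pow_succ]
  ring

theorem rpow_inv_le_neg_deriv_of_flux_le {B : ℝ} (hk : 0 < k) (hr : 0 < r)
    (hd : deriv u r ≤ 0) (hB : 0 ≤ B) (h : flux n k u r ≤ -(B * r ^ (n - k))) :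
    B ^ (k⁻¹ : ℝ) ≤ -deriv u r := by
  rw [flux_eq_of_deriv_nonpos hk hd, neg_le_neg_iff, mul_comm] at h
  have hpow : B ≤ (-deriv u r) ^ k := le_of_mul_le_mul_left h (pow_pos hr _)
  rw [rpow_inv_le_iff_of_pos hB (neg_nonneg.2 hd) (by exact_mod_cast hk), rpow_natCast]
  exact hpow

namespace IsRegularSolution

theorem hasDerivAt (hu : IsRegularSolution n k p ρ u) (hr : 0 < r) :
    HasDerivAt u (deriv u r) r :=
  ((hu.contDiffOn.differentiableOn one_ne_zero).differentiableAt (Ici_mem_nhds hr)).hasDerivAt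

theorem tendsto_flux_nhdsGT_zero (hu : IsRegularSolution n k p ρ u) :
    Tendsto (flux n k u) (𝓝[>] 0) (𝓝 0) := by
  set g := derivWithin u (Ici 0)
  have hg : ContinuousWithinAt g (Ici 0) 0 :=
    hu.contDiffOn.continuousOn_derivWithin (uniqueDiffOn_Ici 0) le_rfl 0 self_mem_Ici
  have hF : ContinuousWithinAt (fun r ↦ r ^ (n - k) * |g r| ^ (k - 1) * g r) (Ici 0) 0 :=
    ((continuousWithinAt_id.pow _).mul (hg.abs.pow _)).mul hg
  have hlim := hF.tendsto.mono_left (nhdsWithin_mono _ Ioi_subset_Ici_self)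
  simp only [g, hu.deriv_zero, mul_zero] at hlim
  refine hlim.congr' ?_
  filter_upwards [self_mem_nhdsWithin] with r (hr : 0 < r)
  simp only [flux, derivWithin_of_mem_nhds (Ici_mem_nhds hr)]

theorem flux_strictAntiOn (hu : IsRegularSolution n k p ρ u) (hk : 0 < k) (hkn : k ≤ n) :
    StrictAntiOn (flux n k u) (Ioi 0) := by
  refine strictAntiOn_of_hasDerivWithinAt_neg (convex_Ioi 0)
    (fun r hr ↦ (hu.eqn r hr).continuousAt.continuousWithinAt)
    (fun r hr ↦ (hu.eqn r (interior_subset hr)).hasDerivWithinAt) fun r hr ↦ ?_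
  rw [interior_Ioi] at hr
  have hc : 0 < (k : ℝ) / binomC n k := div_pos (by exact_mod_cast hk) (binomC_pos hkn)
  have := mul_pos (mul_pos hc (pow_pos hr (n - 1))) (rpow_pos_of_pos (hu.pos r hr.le) p)
  linarith

theorem flux_neg (hu : IsRegularSolution n k p ρ u) (hk : 0 < k) (hkn : k ≤ n) (hr : 0 < r) :
    flux n k u r < 0 := by
  have hanti := hu.flux_strictAntiOn hk hkn
  have hhalf : flux n k u (r / 2) ≤ 0 :=
    (hanti.antitoneOn.mono Ioc_subset_Ioi_self).le_of_tendsto_nhdsGT (by linarith)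
      hu.tendsto_flux_nhdsGT_zero
  exact (hanti (mem_Ioi.2 (by linarith)) (mem_Ioi.2 hr) (by linarith)).trans_le hhalf

theorem deriv_neg (hu : IsRegularSolution n k p ρ u) (hk : 0 < k) (hkn : k ≤ n) (hr : 0 < r) :
    deriv u r < 0 := by
  by_contra! hd
  have : 0 ≤ flux n k u r := mul_nonneg (by positivity) hd
  exact (hu.flux_neg hk hkn hr).not_ge this

theorem antitoneOn (hu : IsRegularSolution n k p ρ u) (hk : 0 < k) (hkn : k ≤ n) :
    AntitoneOn u (Ici 0) := by
  refine antitoneOn_of_hasDerivWithinAt_nonpos (f' := deriv u) (convex_Ici 0)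
    hu.contDiffOn.continuousOn (fun r hr ↦ ?_) (fun r hr ↦ ?_) <;> rw [interior_Ici] at hr
  · exact (hu.hasDerivAt hr).hasDerivWithinAt
  · exact (hu.deriv_neg hk hkn hr).le

theorem flux_le (hu : IsRegularSolution n k p ρ u) (hk : 0 < k) (hkn : k ≤ n) (hp : 0 ≤ p)
    (hr : 0 < r) :
    flux n k u r ≤ -(k / binomC n k / n * u r ^ p * r ^ k * r ^ (n - k)) := by
  set c := (k : ℝ) / binomC n k
  have hc : 0 < c := div_pos (by exact_mod_cast hk) (binomC_pos hkn)
  have hn : n ≠ 0 := by omega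
  have hanti : AntitoneOn (fun a ↦ flux n k u a + c / n * u r ^ p * a ^ n) (Ioc 0 r) := by
    refine antitoneOn_of_forall_hasDerivAt_nonpos (convex_Ioc 0 r)
      (fun a ha ↦ (hu.eqn a ha.1).add ((hasDerivAt_pow n a).const_mul _)) fun a ha ↦ ?_
    rw [interior_Ioc] at ha
    have hua : u r ^ p ≤ u a ^ p := rpow_le_rpow (hu.pos r hr.le).le
      (hu.antitoneOn hk hkn ha.1.le hr.le ha.2.le) hp
    have := mul_le_mul_of_nonneg_left hua (mul_pos hc (pow_pos ha.1 (n - 1))).le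
    have hpow : c / n * u r ^ p * (n * a ^ (n - 1)) = c * a ^ (n - 1) * u r ^ p := by
      field_simp
    rw [hpow]
    linarith
  have hlim : Tendsto (fun a ↦ flux n k u a + c / n * u r ^ p * a ^ n) (𝓝[>] 0) (𝓝 0) := by
    have : Tendsto (fun a : ℝ ↦ a ^ n) (𝓝[>] 0) (𝓝 0) :=
      ((continuous_pow n).tendsto' 0 0 (zero_pow hn)).mono_left nhdsWithin_le_nhds
    simpa using hu.tendsto_flux_nhdsGT_zero.add (this.const_mul (c / n * u r ^ p))
  have h := hanti.le_of_tendsto_nhdsGT hr hlim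
  rw [mul_assoc _ (r ^ k), ← pow_add, Nat.add_sub_cancel' hkn]
  linarith

theorem mul_rpow_mul_le_neg_deriv (hu : IsRegularSolution n k p ρ u) (hk : 0 < k)
    (hkn : k ≤ n) (hp : 0 ≤ p) (hr : 0 < r) :
    (k / binomC n k / n) ^ (k⁻¹ : ℝ) * u r ^ (p / k) * r ≤ -deriv u r := by
  have hc : 0 ≤ (k : ℝ) / binomC n k / n := by have := binomC_pos hkn; positivity
  have hu' := rpow_pos_of_pos (hu.pos r hr.le) p
  have h := rpow_inv_le_neg_deriv_of_flux_le hk hr (hu.deriv_neg hk hkn hr).le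
    (mul_nonneg (mul_nonneg hc hu'.le) (pow_pos hr k).le) (hu.flux_le hk hkn hp hr)
  rwa [mul_rpow (mul_nonneg hc hu'.le) (by positivity), mul_rpow hc hu'.le,
    pow_rpow_inv_natCast hr.le hk.ne', ← rpow_mul (hu.pos r hr.le).le, ← div_eq_mul_inv] at h

theorem mul_rpow_le_neg_deriv (hu : IsRegularSolution n k p ρ u) (hk : 0 < k) (hkn : k ≤ n)
    (hr : 1 ≤ r) :
    (-flux n k u 1) ^ (k⁻¹ : ℝ) * r ^ (-(((n : ℝ) - k) / k)) ≤ -deriv u r := by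
  have hr0 : 0 < r := one_pos.trans_le hr
  have hm : 0 ≤ -flux n k u 1 := (neg_pos.2 (hu.flux_neg hk hkn one_pos)).le
  have hflux : flux n k u r ≤ flux n k u 1 :=
    (hu.flux_strictAntiOn hk hkn).antitoneOn (mem_Ioi.2 one_pos) (mem_Ioi.2 hr0) hr
  have h := rpow_inv_le_neg_deriv_of_flux_le (B := -flux n k u 1 * (r ^ (n - k))⁻¹) hk hr0
    (hu.deriv_neg hk hkn hr0).le (by positivity)
    (by rwa [inv_mul_cancel_right₀ (pow_pos hr0 _).ne', neg_neg])
  rwa [mul_rpow hm (by positivity), inv_rpow (by positivity), ← rpow_natCast,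
    ← rpow_mul hr0.le, ← rpow_neg hr0.le, Nat.cast_sub hkn, ← div_eq_mul_inv] at h

theorem exists_le_mul_rpow (hu : IsRegularSolution n k p ρ u) (hk : 0 < k) (hkn : k ≤ n)
    (hpk : (k : ℝ) < p) : ∃ C, 0 < C ∧ ∀ r, 2 ≤ r → u r ≤ C * r ^ (-(2 * (k : ℝ) / (p - k))) := by
  have hkR : (0 : ℝ) < k := by exact_mod_cast hk
  have hc : 0 < (k : ℝ) / binomC n k / n :=
    div_pos (div_pos hkR (binomC_pos hkn)) (by exact_mod_cast hk.trans_le hkn)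
  rw [show 2 * (k : ℝ) / (p - k) = 2 / ((p - k) / k) by field_simp]
  refine exists_le_mul_rpow_of_mul_rpow_le_neg_deriv (rpow_pos_of_pos hc (k⁻¹ : ℝ))
    (div_pos (sub_pos.2 hpk) hkR) (fun x hx ↦ hu.pos x hx.le)
    (fun x hx ↦ (hu.hasDerivAt hx).differentiableAt) fun x hx ↦ ?_
  rw [one_add_div hkR.ne', add_sub_cancel]
  exact hu.mul_rpow_mul_le_neg_deriv hk hkn (by linarith) hx

theorem tendsto_atTop_zero (hu : IsRegularSolution n k p ρ u) (hk : 0 < k) (hkn : k ≤ n)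
    (hpk : (k : ℝ) < p) : Tendsto u atTop (𝓝 0) := by
  obtain ⟨C, -, hC⟩ := hu.exists_le_mul_rpow hk hkn hpk
  refine squeeze_zero' ?_ ((eventually_ge_atTop 2).mono hC) ?_
  · filter_upwards [eventually_ge_atTop 0] with r hr using (hu.pos r hr).le
  · simpa using (tendsto_rpow_neg_atTop (div_pos (by positivity) (sub_pos.2 hpk))).const_mul C

theorem exists_mul_rpow_le (hu : IsRegularSolution n k p ρ u) (hk : 0 < k) (h2k : 2 * k < n)
    (hlim : Tendsto u atTop (𝓝 0)) :
    ∃ C, 0 < C ∧ ∀ r, 1 ≤ r → C * r ^ (-(((n : ℝ) - 2 * k) / k)) ≤ u r := by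
  have hkR : (0 : ℝ) < k := by exact_mod_cast hk
  have hγ : 0 < ((n : ℝ) - 2 * k) / k := by
    have : (2 * k : ℝ) < n := by exact_mod_cast h2k
    exact div_pos (by linarith) hkR
  have hγ1 : ((n : ℝ) - 2 * k) / k + 1 = ((n : ℝ) - k) / k := by field_simp; ring
  have hm : 0 < (-flux n k u 1) ^ (k⁻¹ : ℝ) :=
    rpow_pos_of_pos (neg_pos.2 (hu.flux_neg hk (by omega) one_pos)) _
  refine ⟨_, div_pos hm hγ, div_mul_rpow_neg_le_of_deriv_le one_pos hγ
    (fun x hx ↦ (hu.hasDerivAt (one_pos.trans_le hx)).differentiableAt) (fun x hx ↦ ?_) hlim⟩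
  rw [hγ1]
  exact le_neg.2 (hu.mul_rpow_le_neg_deriv hk (by omega) hx)

end IsRegularSolution

end RegularSolution

theorem basic_properties_regular_solution_general (n k : ℕ) (p ρ : ℝ) (u : ℝ → ℝ)
    (hk1 : 1 < k) (hk2 : 2 * k < n)
    (hp : (n : ℝ) * k / ((n : ℝ) - 2 * k) < p)
    (hu : IsRegularSolution n k p ρ u) :
    (∀ r : ℝ, 0 < r → deriv u r < 0) ∧
    Tendsto u atTop (nhds 0) ∧
    ∃ C₁ C₂ R : ℝ, 0 < C₁ ∧ 0 < C₂ ∧ 0 < R ∧ ∀ r : ℝ, R ≤ r →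
      C₁ * r ^ (-(((n : ℝ) - 2 * k) / k)) ≤ u r ∧
      u r ≤ C₂ * r ^ (-(2 * (k : ℝ) / (p - k))) := by
  have hk : 0 < k := by omega
  have hkn : k ≤ n := by omega
  have hpk : (k : ℝ) < p := by
    have hn2k : (0 : ℝ) < n - 2 * k := by
      have : (2 * k : ℝ) < n := by exact_mod_cast hk2
      linarith
    refine lt_of_le_of_lt ((le_div_iff₀ hn2k).2 ?_) hp
    nlinarith
  have hlim := hu.tendsto_atTop_zero hk hkn hpk
  obtain ⟨C₁, hC₁, hlower⟩ := hu.exists_mul_rpow_le hk hk2 hlim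
  obtain ⟨C₂, hC₂, hupper⟩ := hu.exists_le_mul_rpow hk hkn hpk
  exact ⟨fun r hr ↦ hu.deriv_neg hk hkn hr, hlim, C₁, C₂, 2, hC₁, hC₂, two_pos,
    fun r hr ↦ ⟨hlower r (by linarith), hupper r hr⟩⟩

/-- a regular solution has negative derivative, tends to `0` at infinity,
and satisfies `C₁ r^{-(n-2k)/k} ≤ u(r) ≤ C₂ r^{-2k/(p-k)}` for large `r`. -/
theorem basic_properties_regular_solution (n k : ℕ) (p ρ : ℝ) (u : ℝ → ℝ)
    (hn : 3 ≤ n) (hk1 : 1 < k) (hk2 : 2 * k < n) (hρ : 0 < ρ)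
    (hp : (n : ℝ) * k / ((n : ℝ) - 2 * k) < p)
    (hu : IsRegularSolution n k p ρ u) :
    (∀ r : ℝ, 0 < r → deriv u r < 0) ∧
    Tendsto u atTop (nhds 0) ∧
    ∃ C₁ C₂ R : ℝ, 0 < C₁ ∧ 0 < C₂ ∧ 0 < R ∧ ∀ r : ℝ, R ≤ r →
      C₁ * r ^ (-(((n : ℝ) - 2 * k) / k)) ≤ u r ∧
      u r ≤ C₂ * r ^ (-(2 * (k : ℝ) / (p - k))) :=
  basic_properties_regular_solution_general n k p ρ u hk1 hk2 hp hu

end KHessianPaper
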